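/- Let p > 2 be a prime. Then p + 2 is prime (i.e., p is a twin prime) if and only if ξ(p) = ξ(p + 2). -/
import Mathlib


/-- The prime index function ι(n) = (-1)^π(n), where π is the prime counting
function (number of primes ≤ n). -/
def iota (n : ℕ) : ℤ := (-1) ^ (Nat.primeCounting n)

/-- The second prime index function ξ(x) = ∑_{n=1}^{x} ι(n). -/
def xi (x : ℕ) : ℤ := ∑ n ∈ Finset.Icc 1 x, iota n

lemma pc_succ (n : ℕ) : Nat.primeCounting (n+1) =
    Nat.primeCounting n + if Nat.Prime (n+1) then 1 else 0 := by
  simp [Nat.primeCounting, Nat.primeCounting', Nat.count_succ]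

lemma xi_succ (x : ℕ) : xi (x+1) = xi x + iota (x+1) := by
  rw [xi, xi, Finset.sum_Icc_succ_top (by omega)]

theorem twin_prime_iff_xi_eq (p : ℕ) (hp : Nat.Prime p) (hp2 : 2 < p) :
    Nat.Prime (p + 2) ↔ xi p = xi (p + 2) := by
  have hodd : ¬ Nat.Prime (p+1) := by
    intro h
    have he : Even (p+1) := by
      have : Odd p := hp.odd_of_ne_two (by omega)
      exact Odd.add_one this
    have := (Nat.Prime.even_iff h).mp he
    omega
  have h1 : xi (p+2) = xi p + iota (p+1) + iota (p+2) := by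
    have : p + 2 = (p+1) + 1 := rfl
    rw [this, xi_succ, xi_succ]
  have h2 : Nat.primeCounting (p+1) = Nat.primeCounting p := by
    rw [pc_succ]; simp [hodd]
  have h3 : Nat.primeCounting (p+2) = Nat.primeCounting (p+1)
      + if Nat.Prime (p+2) then 1 else 0 := pc_succ (p+1)
  constructor
  · intro h
    simp [h1, iota, h2, h3, h, pow_succ]
  · intro h
    by_contra hn
    simp [h1, iota, h2, h3, hn] at h
    have : ((-1:ℤ)) ^ Nat.primeCounting p ≠ 0 := by positivity
    omega
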